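/- arXiv:1506.04216 — 3 statements merged into one kernel-verified Lean document; each statement's English description precedes it below -/
import Mathlib

section
/- Suppose the EXTRA iterates x^t (x^1 = Z x^0 − α ∇f(x^0), x^{t+1} = (I+Z)x^t − Z̃ x^{t−1} − α[∇f(x^t) − ∇f(x^{t−1})] for t ≥ 1, with α > 0) converge to a limit x^∞ ∈ ℝ^{Np}, where ∇f is continuous. If W, W̃ are symmetric with null(W̃ − W) = span(1_N) and null(I − W̃) ⊇ span(1_N), then the limit satisfies both KKT conditions of the consensus problem: (i) x^∞ = 1_N ⊗ w for some w ∈ ℝ^p (consensus), and (ii) (1_N ⊗ I_p)ᵀ ∇f(x^∞) = 0 (the sum of the local gradients vanishes). -/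
open Finset Filter Topology
open scoped Matrix

/-!
Passing to the limit in the EXTRA recursion, the differences `x^{t+1} - x^t` and
`∇f(x^{t+1}) - ∇f(x^t)` vanish and what is left is `(Z̃ - Z) x^∞ = 0`; read coordinate by
coordinate, the null-space assumption on `W̃ - W` makes `x^∞` a consensus vector.
Symmetry together with `W 1 = W̃ 1 = 1` makes both matrices column stochastic, so summing the
recursion over the nodes it telescopes to `Σₙ xₙ^{t+1} = Σₙ xₙ^t - α Σₙ ∇fₙ(xₙ^t)`, and letting
`t → ∞` gives `α Σₙ ∇fₙ(xₙ^∞) = 0`.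
-/

theorem Matrix.IsSymm.one_vecMul_eq_one {ι R : Type*} [Fintype ι] [CommSemiring R]
    {M : Matrix ι ι R} (hM : M.IsSymm) (h1 : M *ᵥ 1 = 1) : 1 ᵥ* M = 1 := by
  rwa [← Matrix.vecMul_transpose, hM.eq] at h1

theorem sum_sum_smul_eq_sum_of_one_vecMul_eq_one {ι R E : Type*} [Fintype ι] [Semiring R]
    [AddCommMonoid E] [Module R E] {M : Matrix ι ι R} (hM : 1 ᵥ* M = 1) (v : ι → E) :
    ∑ n, ∑ m, M n m • v m = ∑ m, v m := by
  rw [Finset.sum_comm]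
  refine Finset.sum_congr rfl fun m _ => ?_
  have hcol : ∑ n, M n m = 1 := by simpa [Matrix.vecMul, dotProduct] using congrFun hM m
  rw [← Finset.sum_smul, hcol, one_smul]

theorem eq_of_tendsto_of_recurrence {X : Type*} [TopologicalSpace X] [T2Space X]
    {x : ℕ → X} {L : X} {Φ : X → X → X} (hΦ : ContinuousAt (Function.uncurry Φ) (L, L))
    (hx : Tendsto x atTop (𝓝 L)) (hrec : ∀ t, x (t + 2) = Φ (x (t + 1)) (x t)) :
    Φ L L = L := by
  have hpair : Tendsto (fun t => (x (t + 1), x t)) atTop (𝓝 (L, L)) :=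
    (hx.comp (tendsto_add_atTop_nat 1)).prodMk_nhds hx
  refine tendsto_nhds_unique ((hΦ.tendsto.comp hpair).congr fun t => (hrec t).symm) ?_
  exact hx.comp (tendsto_add_atTop_nat 2)

theorem eq_zero_of_tendsto_of_sub_smul {𝕜 E : Type*} [Field 𝕜] [AddCommGroup E]
    [TopologicalSpace E] [IsTopologicalAddGroup E] [T2Space E] [Module 𝕜 E]
    [ContinuousConstSMul 𝕜 E] [NoZeroSMulDivisors 𝕜 E]
    {s g : ℕ → E} {L G : E} {α : 𝕜} (hα : α ≠ 0)
    (hs : Tendsto s atTop (𝓝 L)) (hg : Tendsto g atTop (𝓝 G))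
    (hstep : ∀ t, s (t + 1) = s t - α • g t) : G = 0 := by
  have hdiff : Tendsto (fun t => s (t + 1) - s t) atTop (𝓝 (L - L)) :=
    (hs.comp (tendsto_add_atTop_nat 1)).sub hs
  have hdiff' : Tendsto (fun t => s (t + 1) - s t) atTop (𝓝 (-(α • G))) :=
    (hg.const_smul α).neg.congr fun t => by rw [hstep t]; abel
  have : α • G = 0 := by rw [← neg_eq_zero, tendsto_nhds_unique hdiff' hdiff, sub_self]
  exact (smul_eq_zero.mp this).resolve_left hα

theorem exists_eq_const_of_sum_smul_eq {ι κ : Type*} [Fintype ι] [Fintype κ]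
    {W Wt : Matrix ι ι ℝ} (hker : ∀ v : ι → ℝ, (Wt - W) *ᵥ v = 0 → ∃ c : ℝ, v = fun _ => c)
    {L : ι → EuclideanSpace ℝ κ} (h : ∀ n, ∑ m, W n m • L m = ∑ m, Wt n m • L m) :
    ∃ w, ∀ n, L n = w := by
  have hcoord : ∀ i, ∃ c : ℝ, (fun n => L n i) = fun _ => c := by
    refine fun i => hker _ (funext fun n => ?_)
    have := congrArg (fun y : EuclideanSpace ℝ κ => y i) (h n)
    simp only [WithLp.ofLp_sum, WithLp.ofLp_smul, Finset.sum_apply, Pi.smul_apply,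
      smul_eq_mul] at this
    rw [Matrix.sub_mulVec, Pi.sub_apply, Pi.zero_apply, sub_eq_zero]
    simpa [Matrix.mulVec, dotProduct] using this.symm
  choose c hc using hcoord
  exact ⟨WithLp.toLp 2 c, fun n => by ext i; exact congrFun (hc i) n⟩

theorem extra_sum_succ {ι R E : Type*} [Fintype ι] [CommRing R] [AddCommGroup E] [Module R E]
    {W Wt : Matrix ι ι R} (hW : 1 ᵥ* W = 1) (hWt : 1 ᵥ* Wt = 1) {α : R} {g : ι → E → E}
    {x : ℕ → ι → E} (hinit : ∀ n, x 1 n = (∑ m, W n m • x 0 m) - α • g n (x 0 n))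
    (hrec : ∀ t n, x (t + 2) n = x (t + 1) n + (∑ m, W n m • x (t + 1) m)
        - (∑ m, Wt n m • x t m) - α • (g n (x (t + 1) n) - g n (x t n))) (t : ℕ) :
    ∑ n, x (t + 1) n = ∑ n, x t n - α • ∑ n, g n (x t n) := by
  induction t with
  | zero =>
    simp only [zero_add, hinit, Finset.sum_sub_distrib, Finset.smul_sum,
      sum_sum_smul_eq_sum_of_one_vecMul_eq_one hW]
  | succ t ih =>
    have hsum : ∑ n, x (t + 2) n = ∑ n, x (t + 1) n + ∑ n, x (t + 1) n - ∑ n, x t n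
        - α • (∑ n, g n (x (t + 1) n) - ∑ n, g n (x t n)) := by
      simp only [hrec, smul_sub, Finset.sum_sub_distrib, Finset.sum_add_distrib, Finset.smul_sum,
        sum_sum_smul_eq_sum_of_one_vecMul_eq_one hW, sum_sum_smul_eq_sum_of_one_vecMul_eq_one hWt]
    rw [hsum, ih, smul_sub]
    abel

theorem extra_limit_point_kkt_general
    {N p : ℕ}
    (f : Fin N → EuclideanSpace ℝ (Fin p) → ℝ)
    (hcont : ∀ n, Continuous (fun w => gradient (f n) w))
    (α : ℝ) (hα : 0 < α)
    (W Wt : Matrix (Fin N) (Fin N) ℝ)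
    (hWsym : W.IsSymm) (hWtsym : Wt.IsSymm)
    (hnulldiff : ∀ v : Fin N → ℝ, (Wt - W).mulVec v = 0 ↔ ∃ c : ℝ, v = fun _ => c)
    (hnullWt : ((1 : Matrix (Fin N) (Fin N) ℝ) - Wt).mulVec (fun _ => (1:ℝ)) = 0)
    (x : ℕ → Fin N → EuclideanSpace ℝ (Fin p))
    (hinit : ∀ n, x 1 n = (∑ m, W n m • x 0 m) - α • gradient (f n) (x 0 n))
    (hrec : ∀ t n, x (t+2) n = x (t+1) n + (∑ m, W n m • x (t+1) m)
        - (∑ m, Wt n m • x t m)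
        - α • (gradient (f n) (x (t+1) n) - gradient (f n) (x t n)))
    (xinf : Fin N → EuclideanSpace ℝ (Fin p))
    (hlim : Tendsto x atTop (nhds xinf)) :
    (∃ w, ∀ n, xinf n = w) ∧ (∑ n, gradient (f n) (xinf n)) = 0 := by
  have hWt1 : Wt *ᵥ 1 = 1 := by
    rw [Matrix.sub_mulVec, Matrix.one_mulVec, sub_eq_zero] at hnullWt
    exact hnullWt.symm
  have hW1 : W *ᵥ 1 = 1 := by
    have h := (hnulldiff 1).mpr ⟨1, rfl⟩
    rwa [Matrix.sub_mulVec, sub_eq_zero, hWt1, eq_comm] at h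
  have hfix : ∀ n, ∑ m, W n m • xinf m = ∑ m, Wt n m • xinf m := by
    let Φ : (Fin N → EuclideanSpace ℝ (Fin p)) → (Fin N → EuclideanSpace ℝ (Fin p)) →
        Fin N → EuclideanSpace ℝ (Fin p) := fun y z n =>
      y n + (∑ m, W n m • y m) - (∑ m, Wt n m • z m)
        - α • (gradient (f n) (y n) - gradient (f n) (z n))
    have hΦ : Continuous (Function.uncurry Φ) := by fun_prop
    have h := eq_of_tendsto_of_recurrence hΦ.continuousAt hlim fun t => funext (hrec t)
    intro n
    have hn := congrFun h n
    simp only [Φ, sub_self, smul_zero, sub_zero] at hn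
    rwa [add_sub_assoc, add_eq_left, sub_eq_zero] at hn
  refine ⟨exists_eq_const_of_sum_smul_eq (fun v => (hnulldiff v).mp) hfix, ?_⟩
  have hlimn : ∀ n, Tendsto (fun t => x t n) atTop (𝓝 (xinf n)) := tendsto_pi_nhds.mp hlim
  exact eq_zero_of_tendsto_of_sub_smul hα.ne' (tendsto_finsetSum _ fun n _ => hlimn n)
    (tendsto_finsetSum _ fun n _ => ((hcont n).tendsto _).comp (hlimn n))
    (extra_sum_succ (hWsym.one_vecMul_eq_one hW1) (hWtsym.one_vecMul_eq_one hWt1) hinit hrec)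

/-- **Limit points of EXTRA satisfy the KKT conditions of the consensus problem.**
Node `n` holds a differentiable `f n : ℝᵖ → ℝ` with continuous gradient; the EXTRA
iterates `x t : Fin N → ℝᵖ` (blockwise, with `Z = W ⊗ I`, `Z̃ = W̃ ⊗ I` acting
block by block) are assumed to converge to `xinf`.  If `W, W̃` are symmetric,
`null(W̃ − W) = span(1)` and `1 ∈ null(I − W̃)`, then the limit is a consensus
vector and the sum of the local gradients vanishes at it. -/
theorem extra_limit_point_kkt
    {N p : ℕ}
    (f : Fin N → EuclideanSpace ℝ (Fin p) → ℝ)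
    (hdiff : ∀ n, Differentiable ℝ (f n))
    (hcont : ∀ n, Continuous (fun w => gradient (f n) w))
    (α : ℝ) (hα : 0 < α)
    (W Wt : Matrix (Fin N) (Fin N) ℝ)
    (hWsym : W.IsSymm) (hWtsym : Wt.IsSymm)
    (hnulldiff : ∀ v : Fin N → ℝ, (Wt - W).mulVec v = 0 ↔ ∃ c : ℝ, v = fun _ => c)
    (hnullWt : ((1 : Matrix (Fin N) (Fin N) ℝ) - Wt).mulVec (fun _ => (1:ℝ)) = 0)
    (x : ℕ → Fin N → EuclideanSpace ℝ (Fin p))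
    (hinit : ∀ n, x 1 n = (∑ m, W n m • x 0 m) - α • gradient (f n) (x 0 n))
    (hrec : ∀ t n, x (t+2) n = x (t+1) n + (∑ m, W n m • x (t+1) m)
        - (∑ m, Wt n m • x t m)
        - α • (gradient (f n) (x (t+1) n) - gradient (f n) (x t n)))
    (xinf : Fin N → EuclideanSpace ℝ (Fin p))
    (hlim : Tendsto x atTop (nhds xinf)) :
    (∃ w, ∀ n, xinf n = w) ∧ (∑ n, gradient (f n) (xinf n)) = 0 :=
  extra_limit_point_kkt_general f hcont α hα W Wt hWsym hWtsym hnulldiff hnullWt x hinit hrec xinf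
    hlim
end

section
/- Let (x^t)_{t≥0} in ℝ^{Np} satisfy the EXTRA recursion x^1 = Z x^0 − α ∇f(x^0) and x^{t+1} = (I+Z)x^t − Z̃ x^{t−1} − α[∇f(x^t) − ∇f(x^{t−1})] for t ≥ 1, where Z ⪯ Z̃ so that U = (Z̃ − Z)^{1/2} is well defined. Define the dual sequence v^t = Σ_{s=0}^{t} U x^s. Then the pair (x^t, v^t) satisfies the saddle point (primal-dual) recursion: x^{t+1} = x^t − [α ∇f(x^t) + (I − Z̃) x^t + U v^t] and v^{t+1} = v^t + U x^{t+1} for all t ≥ 0; i.e., EXTRA is a saddle point method with stepsize α applied to the augmented Lagrangian L(x,v) = f(x) + (1/α) vᵀ U x + (1/2α) xᵀ(I − Z̃)x. -/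
/-!
Write `gᵗ = α ∇f(xᵗ)` and `Sᵗ = ∑_{s ≤ t} U xˢ`, so that `U Sᵗ = ∑_{s ≤ t} U² xˢ` with
`U² = Z̃ - Z`. Subtracting the claimed primal update at time `t` from the one at `t + 1`
turns it into the EXTRA recursion, and at `t = 0` it is the EXTRA initial step; so the
primal update follows by induction.
-/

open Finset

/-- The action of an `Np × Np` matrix on a vector of `ℝ^{Np}`. -/
noncomputable def mAct {d : ℕ} (Z : Matrix (Fin d) (Fin d) ℝ) (x : EuclideanSpace ℝ (Fin d)) :
    EuclideanSpace ℝ (Fin d) := WithLp.toLp 2 (Z.mulVec x)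

lemma mAct_mAct {d : ℕ} (A B : Matrix (Fin d) (Fin d) ℝ) (x : EuclideanSpace ℝ (Fin d)) :
    mAct A (mAct B x) = mAct (A * B) x := by
  simp [mAct, Matrix.mulVec_mulVec]

lemma mAct_sub_left {d : ℕ} (A B : Matrix (Fin d) (Fin d) ℝ) (x : EuclideanSpace ℝ (Fin d)) :
    mAct (A - B) x = mAct A x - mAct B x := by
  simp [mAct, Matrix.sub_mulVec]

theorem extra_primal_step {E : Type*} [AddCommGroup E] (Z Zt : E → E) (U : E →+ E)
    (hU : ∀ y, U (U y) = Zt y - Z y) (x g : ℕ → E) (hinit : x 1 = Z (x 0) - g 0)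
    (hrec : ∀ t, x (t + 2) = x (t + 1) + Z (x (t + 1)) - Zt (x t) - (g (t + 1) - g t))
    (t : ℕ) :
    x (t + 1) = x t - (g t + (x t - Zt (x t)) + U (∑ s ∈ range (t + 1), U (x s))) := by
  induction t with
  | zero =>
    rw [sum_range_one, hU, hinit]
    abel
  | succ t ih =>
    have hUsum : U (∑ s ∈ range (t + 1), U (x s)) = x t - x (t + 1) - g t - x t + Zt (x t) := by
      rw [ih]; abel
    rw [sum_range_succ, map_add, hUsum, hU, hrec]
    abel

theorem extra_saddle_point_recursion_general
    {d : ℕ} (f : EuclideanSpace ℝ (Fin d) → ℝ)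
    (α : ℝ)
    (Z Zt U : Matrix (Fin d) (Fin d) ℝ)
    (hU2 : U * U = Zt - Z)
    (x v : ℕ → EuclideanSpace ℝ (Fin d))
    (hinit : x 1 = mAct Z (x 0) - α • gradient f (x 0))
    (hrec : ∀ t : ℕ, x (t+2) = x (t+1) + mAct Z (x (t+1)) - mAct Zt (x t)
        - α • (gradient f (x (t+1)) - gradient f (x t)))
    (hv : ∀ t, v t = ∑ s ∈ Finset.range (t+1), mAct U (x s)) :
    (∀ t, x (t+1) = x t - (α • gradient f (x t) + (x t - mAct Zt (x t)) + mAct U (v t)))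
    ∧ (∀ t, v (t+1) = v t + mAct U (x (t+1))) := by
  have hUU (y : EuclideanSpace ℝ (Fin d)) : mAct U (mAct U y) = mAct Zt y - mAct Z y := by
    rw [mAct_mAct, hU2, mAct_sub_left]
  refine ⟨fun t => ?_, fun t => by rw [hv, hv, sum_range_succ]⟩
  rw [hv t]
  exact extra_primal_step (mAct Z) (mAct Zt) (Matrix.toEuclideanLin U).toAddMonoidHom hUU x
    (fun t => α • gradient f (x t)) hinit (fun t => by rw [hrec, smul_sub]) t

/-- **EXTRA is a saddle point method.**  Let `U = (Z̃ − Z)^{1/2}` (the positive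
semidefinite square root, i.e. `U` is PSD with `U * U = Z̃ − Z`) and define the
dual sequence `vᵗ = ∑_{s=0}^{t} U xˢ`.  If `(xᵗ)` satisfies the EXTRA recursion
(`x¹ = Z x⁰ − α ∇f(x⁰)`, `x^{t+1} = (I+Z)xᵗ − Z̃ x^{t−1} − α(∇f(xᵗ) − ∇f(x^{t−1}))`),
then the pair `(xᵗ, vᵗ)` satisfies the primal-dual (saddle point) recursion of the
augmented Lagrangian `L(x,v) = f(x) + (1/α) vᵀUx + (1/2α) xᵀ(I−Z̃)x` with stepsize `α`:
`x^{t+1} = xᵗ − [α ∇f(xᵗ) + (I − Z̃)xᵗ + U vᵗ]` and `v^{t+1} = vᵗ + U x^{t+1}`. -/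
theorem extra_saddle_point_recursion
    {d : ℕ} (f : EuclideanSpace ℝ (Fin d) → ℝ) (hf : Differentiable ℝ f)
    (α : ℝ) (hα : 0 < α)
    (Z Zt U : Matrix (Fin d) (Fin d) ℝ)
    (hZsym : Z.IsSymm) (hZtsym : Zt.IsSymm)
    (hZZt : (Zt - Z).PosSemidef)
    (hU : U.PosSemidef) (hU2 : U * U = Zt - Z)
    (x v : ℕ → EuclideanSpace ℝ (Fin d))
    (hinit : x 1 = mAct Z (x 0) - α • gradient f (x 0))
    (hrec : ∀ t : ℕ, x (t+2) = x (t+1) + mAct Z (x (t+1)) - mAct Zt (x t)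
        - α • (gradient f (x (t+1)) - gradient f (x t)))
    (hv : ∀ t, v t = ∑ s ∈ Finset.range (t+1), mAct U (x s)) :
    (∀ t, x (t+1) = x t - (α • gradient f (x t) + (x t - mAct Zt (x t)) + mAct U (v t)))
    ∧ (∀ t, v (t+1) = v t + mAct U (x (t+1))) :=
  extra_saddle_point_recursion_general f α Z Zt U hU2 x v hinit hrec hv
end

section
/- (Lemma 1) Let x, v, g ∈ ℝ^{Np} and define the DSA primal-dual update x⁺ = x − α g − (I − Z̃)x − U v and v⁺ = v + U x⁺, where U = (Z̃ − Z)^{1/2}. Suppose x* ∈ ℝ^{Np} satisfies (I + Z − 2Z̃) x* = 0 and v* satisfies α ∇f(x*) + U v* = 0. Then α [g − ∇f(x*)] = (I + Z − 2Z̃)(x* − x⁺) + Z̃ (x − x⁺) − U (v⁺ − v*). -/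
open Finset

/-- Since `U vp = U v + (Zt − Z) xp`, the terms in `xp` on the right collapse to `−xp`; substituting
`xp` and the two optimality conditions then leaves `α • g + U vstar = α • (g − gstar)`. -/
theorem Module.End.primal_dual_identity {R E : Type*} [CommRing R] [AddCommGroup E] [Module R E]
    (Z Zt U : Module.End R E) (hU : U * U = Zt - Z) (α : R)
    (x v g xp vp xstar vstar gstar : E)
    (hxp : xp = x - α • g - (x - Zt x) - U v) (hvp : vp = v + U xp)
    (hxstar : xstar + Z xstar - (2 : R) • Zt xstar = 0) (hvstar : α • gstar + U vstar = 0) :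
    α • (g - gstar)
      = ((xstar - xp) + Z (xstar - xp) - (2 : R) • Zt (xstar - xp)) + Zt (x - xp)
        - U (vp - vstar) := by
  have hUU : U (U xp) = Zt xp - Z xp := by
    rw [← Module.End.mul_apply, hU, LinearMap.sub_apply]
  subst hvp
  simp only [map_sub, map_add, hUU]
  subst hxp
  simp only [map_sub, map_smul]
  linear_combination (norm := module) -hxstar - hvstar

theorem dsa_lemma1_primal_dual_identity_general
    {d : ℕ} (f : EuclideanSpace ℝ (Fin d) → ℝ)
    (α : ℝ)
    (Z Zt U : Matrix (Fin d) (Fin d) ℝ)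
    (hU2 : U * U = Zt - Z)
    (x v g xp vp xstar vstar : EuclideanSpace ℝ (Fin d))
    (hxp : xp = x - α • g - (x - mAct Zt x) - mAct U v)
    (hvp : vp = v + mAct U xp)
    (hxstar : xstar + mAct Z xstar - (2:ℝ) • mAct Zt xstar = 0)
    (hvstar : α • gradient f xstar + mAct U vstar = 0) :
    α • (g - gradient f xstar)
      = ((xstar - xp) + mAct Z (xstar - xp) - (2:ℝ) • mAct Zt (xstar - xp))
        + mAct Zt (x - xp) - mAct U (vp - vstar) := by
  -- `mAct A` is definitionally `T A`, so the hypotheses apply as they stand.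
  let T := Matrix.toLpLinAlgEquiv (R := ℝ) (n := Fin d) 2
  exact Module.End.primal_dual_identity (T Z) (T Zt) (T U) (by rw [← map_mul, hU2, map_sub]) α
    x v g xp vp xstar vstar _ hxp hvp hxstar hvstar

/-- **Lemma 1 of the DSA paper.**  With `U = (Z̃ − Z)^{1/2}` (PSD square root),
the DSA primal-dual update `x⁺ = x − α g − (I − Z̃)x − U v`, `v⁺ = v + U x⁺`,
a primal optimum `x*` with `(I + Z − 2Z̃)x* = 0` and a dual optimum `v*` with
`α ∇f(x*) + U v* = 0` satisfy
`α (g − ∇f(x*)) = (I + Z − 2Z̃)(x* − x⁺) + Z̃ (x − x⁺) − U (v⁺ − v*)`. -/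
theorem dsa_lemma1_primal_dual_identity
    {d : ℕ} (f : EuclideanSpace ℝ (Fin d) → ℝ) (hf : Differentiable ℝ f)
    (α : ℝ) (hα : 0 < α)
    (Z Zt U : Matrix (Fin d) (Fin d) ℝ)
    (hZsym : Z.IsSymm) (hZtsym : Zt.IsSymm)
    (hU : U.PosSemidef) (hU2 : U * U = Zt - Z)
    (x v g xp vp xstar vstar : EuclideanSpace ℝ (Fin d))
    (hxp : xp = x - α • g - (x - mAct Zt x) - mAct U v)
    (hvp : vp = v + mAct U xp)
    (hxstar : xstar + mAct Z xstar - (2:ℝ) • mAct Zt xstar = 0)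
    (hvstar : α • gradient f xstar + mAct U vstar = 0) :
    α • (g - gradient f xstar)
      = ((xstar - xp) + mAct Z (xstar - xp) - (2:ℝ) • mAct Zt (xstar - xp))
        + mAct Zt (x - xp) - mAct U (vp - vstar) :=
  dsa_lemma1_primal_dual_identity_general f α Z Zt U hU2 x v g xp vp xstar vstar hxp hvp hxstar
    hvstar
end
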